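/- The matrix M = Z B Σ_T B Zᵀ − ⊕_{r=1}^d μ_r (I_{n_r} − J_{n_r}/n_r) (with all notation as in the hyper-SBM eigendecomposition lemma) has: (i) d eigenvalues equal to the eigenvalues of √B Σ_T √B with eigenvectors in range(Z), and (ii) eigenvalues −μ_1,…,−μ_d with multiplicities n_1−1,…,n_d−1 respectively, with eigenvectors orthogonal to range(Z). -/

import Mathlib

/-!
Let `Z` be the class-membership matrix and `B = (ZᵀZ)⁻¹ = diag(1/nᵣ)`. Then `Z B Zᵀ` is the
orthogonal projection onto `range Z` and the block matrix `⊕ᵣ μᵣ (I - J/nᵣ)` equals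
`diag(μ ∘ z) (I - Z B Zᵀ)`, which annihilates `range Z`. Hence `M Z = Z B Σ_T`, and `B = √B √B`
gives `M (Z √B) = (Z √B)(√B Σ_T √B)`, so `Z √B` carries eigenvectors of `√B Σ_T √B` to
eigenvectors of `M`. A vector supported on class `r` with zero sum is killed by `Zᵀ`, so `M` acts
on it as `-μᵣ`; these vectors are the extensions by zero of the kernel of the sum functional on
`ℝ^{nᵣ}`, a space of dimension `nᵣ - 1`.
-/

open Finset Matrix Function Module

section Membership

variable {ι κ : Type*} (K : Type*) [DecidableEq κ] [Field K]

def membershipMatrix (z : ι → κ) : Matrix ι κ K := of fun i r => if z i = r then 1 else 0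

def invClassSizeMatrix [Fintype ι] (z : ι → κ) : Matrix κ κ K :=
  diagonal fun r => (#{i | z i = r} : K)⁻¹

variable {K} (z : ι → κ)

lemma membershipMatrix_mul [Fintype κ] {m : Type*} (A : Matrix κ m K) :
    membershipMatrix K z * A = A.submatrix z id := by
  ext i j
  simp [membershipMatrix, Matrix.mul_apply]

lemma mul_transpose_membershipMatrix [Fintype κ] {m : Type*} (A : Matrix m κ K) :
    A * (membershipMatrix K z)ᵀ = A.submatrix id z := by
  ext i j
  simp [membershipMatrix, Matrix.mul_apply]

variable [Fintype ι]

lemma transpose_membershipMatrix_mul_self :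
    (membershipMatrix K z)ᵀ * membershipMatrix K z = diagonal fun r => (#{i | z i = r} : K) := by
  ext r s
  simp only [membershipMatrix, Matrix.mul_apply, transpose_apply, of_apply, boole_mul, ← ite_and,
    sum_boole, diagonal_apply]
  split_ifs with h
  · simp [h]
  · rw [filter_false_of_mem fun i _ hi => h (hi.1.symm.trans hi.2), card_empty, Nat.cast_zero]

lemma invClassSizeMatrix_mul_transpose_mul_self [Fintype κ] [CharZero K]
    (hpos : ∀ r, 0 < #{i | z i = r}) :
    invClassSizeMatrix K z * ((membershipMatrix K z)ᵀ * membershipMatrix K z) = 1 := by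
  rw [transpose_membershipMatrix_mul_self, invClassSizeMatrix, diagonal_mul_diagonal,
    ← diagonal_one]
  exact congrArg diagonal (funext fun r => inv_mul_cancel₀ (Nat.cast_ne_zero.mpr (hpos r).ne'))

lemma transpose_membershipMatrix_mulVec_of_support {r : κ} {w : ι → K}
    (hw : ∀ i, z i ≠ r → w i = 0) : (membershipMatrix K z)ᵀ *ᵥ w = Pi.single r (∑ i, w i) := by
  ext s
  simp only [membershipMatrix, mulVec, dotProduct, transpose_apply, of_apply, boole_mul]
  by_cases h : s = r
  · subst h
    rw [Pi.single_eq_same]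
    exact sum_congr rfl fun i _ => by by_cases hi : z i = s <;> simp [hi, hw]
  · rw [Pi.single_eq_of_ne h]
    exact sum_eq_zero fun i _ => by by_cases hi : z i = s <;> simp [hi, hw, h]

lemma diagonal_comp_mulVec_of_support [DecidableEq ι] (c : κ → K) {r : κ} {w : ι → K}
    (hw : ∀ i, z i ≠ r → w i = 0) : diagonal (c ∘ z) *ᵥ w = c r • w := by
  ext i
  by_cases hi : z i = r <;> simp [mulVec_diagonal, hi, hw]

lemma blockCentering_eq [Fintype κ] [DecidableEq ι] (c s : κ → K) :
    (of fun i j => if z i = z j then c (z i) * ((if i = j then 1 else 0) - (s (z i))⁻¹) else 0)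
      = diagonal (c ∘ z) *
          (1 - membershipMatrix K z * diagonal (fun r => (s r)⁻¹) * (membershipMatrix K z)ᵀ) := by
  ext i j
  rw [membershipMatrix_mul, mul_transpose_membershipMatrix]
  by_cases h : z i = z j
  · simp [h, one_apply]
  · have hij : i ≠ j := fun e => h (congrArg z e)
    simp [h, hij, one_apply]

end Membership

lemma Fintype.sum_extend_zero {ι κ M : Type*} [Fintype ι] [Fintype κ] [AddCommMonoid M]
    {e : ι → κ} (he : Injective e) (f : ι → M) : ∑ j, extend e f 0 j = ∑ i, f i :=
  (Fintype.sum_of_injective e he f (extend e f 0) (fun _ hj => extend_apply' _ _ _ hj)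
    fun i => (he.extend_apply f 0 i).symm).symm

lemma finrank_ker_sum_proj {ι : Type*} (K : Type*) [Fintype ι] [Nonempty ι] [Field K] :
    finrank K (LinearMap.ker (∑ i, LinearMap.proj i : (ι → K) →ₗ[K] K)) = Fintype.card ι - 1 := by
  classical
  obtain ⟨i⟩ := ‹Nonempty ι›
  have hne : (∑ j, LinearMap.proj j : (ι → K) →ₗ[K] K) ≠ 0 := fun h => by
    simpa using LinearMap.congr_fun h (Pi.single i 1)
  have := Module.Dual.finrank_ker_add_one_of_ne_zero hne
  rw [finrank_fintype_fun_eq_card] at this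
  omega

section ClassZeroSum

variable {ι κ : Type*} (K : Type*) [Fintype ι] [DecidableEq κ] [Field K]

noncomputable def classZeroSumSubspace (z : ι → κ) (r : κ) : Submodule K (ι → K) :=
  (LinearMap.ker (∑ i, LinearMap.proj i : ({i // z i = r} → K) →ₗ[K] K)).map
    (ExtendByZero.linearMap K Subtype.val)

variable {K} {z : ι → κ} {r : κ}

lemma finrank_classZeroSumSubspace (hr : 0 < #{i | z i = r}) :
    finrank K (classZeroSumSubspace K z r) = #{i | z i = r} - 1 := by
  have : Nonempty {i // z i = r} := by
    obtain ⟨i, hi⟩ := card_pos.mp hr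
    exact ⟨⟨i, (mem_filter.mp hi).2⟩⟩
  rw [classZeroSumSubspace, ← (Submodule.equivMapOfInjective _
    (extend_injective Subtype.val_injective (0 : ι → K)) _).finrank_eq, finrank_ker_sum_proj,
    Fintype.card_subtype]

variable {w : ι → K}

lemma apply_eq_zero_of_mem_classZeroSumSubspace (hw : w ∈ classZeroSumSubspace K z r) {i : ι}
    (hi : z i ≠ r) : w i = 0 := by
  obtain ⟨f, -, rfl⟩ := hw
  exact extend_apply' _ _ _ fun ⟨j, hj⟩ => hi (hj ▸ j.2)

lemma sum_eq_zero_of_mem_classZeroSumSubspace (hw : w ∈ classZeroSumSubspace K z r) :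
    ∑ i, w i = 0 := by
  obtain ⟨f, hf, rfl⟩ := hw
  simpa [Fintype.sum_extend_zero Subtype.val_injective] using hf

lemma transpose_membershipMatrix_mulVec_eq_zero_of_mem (hw : w ∈ classZeroSumSubspace K z r) :
    (membershipMatrix K z)ᵀ *ᵥ w = 0 := by
  rw [transpose_membershipMatrix_mulVec_of_support z
    fun i => apply_eq_zero_of_mem_classZeroSumSubspace hw,
    sum_eq_zero_of_mem_classZeroSumSubspace hw, Pi.single_zero]

lemma dotProduct_membershipMatrix_mulVec_eq_zero_of_mem [Fintype κ]
    (hw : w ∈ classZeroSumSubspace K z r) (v : κ → K) : w ⬝ᵥ membershipMatrix K z *ᵥ v = 0 := by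
  rw [dotProduct_mulVec, ← mulVec_transpose, transpose_membershipMatrix_mulVec_eq_zero_of_mem hw,
    zero_dotProduct]

end ClassZeroSum

section Hsbm

variable {ι κ : Type*} (K : Type*) [Fintype ι] [Fintype κ] [DecidableEq ι] [DecidableEq κ]
  [Field K]

def hsbmMatrix (z : ι → κ) (S : Matrix κ κ K) (c : κ → K) : Matrix ι ι K :=
  membershipMatrix K z * invClassSizeMatrix K z * S * invClassSizeMatrix K z *
      (membershipMatrix K z)ᵀ -
    diagonal (c ∘ z) * (1 - membershipMatrix K z * invClassSizeMatrix K z * (membershipMatrix K z)ᵀ)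

variable {K} (z : ι → κ) (S : Matrix κ κ K) (c : κ → K)

lemma hsbmMatrix_mul_membershipMatrix [CharZero K] (hpos : ∀ r, 0 < #{i | z i = r}) :
    hsbmMatrix K z S c * membershipMatrix K z =
      membershipMatrix K z * invClassSizeMatrix K z * S := by
  have h := invClassSizeMatrix_mul_transpose_mul_self z hpos (K := K)
  simp only [hsbmMatrix, Matrix.sub_mul, Matrix.mul_sub, Matrix.mul_assoc, h, Matrix.mul_one,
    sub_self, sub_zero]

lemma hsbmMatrix_mulVec_of_mem {r : κ} {w : ι → K} (hw : w ∈ classZeroSumSubspace K z r) :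
    hsbmMatrix K z S c *ᵥ w = -c r • w := by
  have h := transpose_membershipMatrix_mulVec_eq_zero_of_mem hw
  rw [hsbmMatrix, sub_mulVec, ← mulVec_mulVec, h, mulVec_zero, zero_sub, ← mulVec_mulVec,
    sub_mulVec, one_mulVec, ← mulVec_mulVec, h, mulVec_zero, sub_zero,
    diagonal_comp_mulVec_of_support z c fun i => apply_eq_zero_of_mem_classZeroSumSubspace hw,
    neg_smul]

end Hsbm

lemma mulVec_mulVec_eq_smul_of_mul_eq {m n K : Type*} [Fintype m] [Fintype n] [CommRing K]
    {A : Matrix m m K} {P : Matrix m n K} {C : Matrix n n K} (h : A * P = P * C) {v : n → K}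
    {lam : K} (hv : C *ᵥ v = lam • v) : A *ᵥ (P *ᵥ v) = lam • (P *ᵥ v) := by
  rw [mulVec_mulVec, h, ← mulVec_mulVec, hv, mulVec_smul]

lemma diagonal_inv_sqrt_mul_self {κ : Type*} [Fintype κ] [DecidableEq κ] {x : κ → ℝ}
    (hx : ∀ r, 0 ≤ x r) :
    (diagonal fun r => (√(x r))⁻¹) * (diagonal fun r => (√(x r))⁻¹) =
      diagonal fun r => (x r)⁻¹ := by
  rw [diagonal_mul_diagonal]
  exact congrArg diagonal (funext fun r => by rw [← mul_inv, Real.mul_self_sqrt (hx r)])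

theorem stmt11_general (n d : ℕ) (z : Fin n → Fin d)
    (nr : Fin d → ℕ) (hnr : nr = fun r => (Finset.univ.filter fun i => z i = r).card)
    (hpos : ∀ r, 0 < nr r)
    (Z : Matrix (Fin n) (Fin d) ℝ) (hZ : Z = Matrix.of fun i r => if z i = r then 1 else 0)
    (B : Matrix (Fin d) (Fin d) ℝ) (hB : B = Matrix.diagonal fun r => ((nr r : ℝ))⁻¹)
    (sqrtB : Matrix (Fin d) (Fin d) ℝ)
    (hsB : sqrtB = Matrix.diagonal fun r => (Real.sqrt (nr r))⁻¹)
    (SigT : Matrix (Fin d) (Fin d) ℝ)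
    (μ : Fin d → ℝ)
    (D : Matrix (Fin n) (Fin n) ℝ)
    (hD : D = Matrix.of fun i j =>
      if z i = z j then μ (z i) * ((if i = j then 1 else 0) - ((nr (z i) : ℝ))⁻¹) else 0)
    (M : Matrix (Fin n) (Fin n) ℝ)
    (hM : M = Z * B * SigT * B * Z.transpose - D) :
    (∀ (lam : ℝ) (v : Fin d → ℝ), (sqrtB * SigT * sqrtB).mulVec v = lam • v →
        M.mulVec ((Z * sqrtB).mulVec v) = lam • (Z * sqrtB).mulVec v) ∧
      (∀ r : Fin d, ∃ W : Submodule ℝ (Fin n → ℝ),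
        Module.finrank ℝ W = nr r - 1 ∧
          ∀ w ∈ W, M.mulVec w = (-μ r) • w ∧
            ∀ v : Fin d → ℝ, dotProduct w (Z.mulVec v) = 0) := by
  subst hnr
  obtain rfl : Z = membershipMatrix ℝ z := hZ
  obtain rfl : B = invClassSizeMatrix ℝ z := hB
  obtain rfl : M = hsbmMatrix ℝ z SigT μ := hM.trans <|
    congrArg (_ - ·) (hD.trans (blockCentering_eq z μ fun r => (#{i | z i = r} : ℝ)))
  have hsqrt : invClassSizeMatrix ℝ z = sqrtB * sqrtB :=
    (hsB ▸ diagonal_inv_sqrt_mul_self fun _ => Nat.cast_nonneg _).symm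
  refine ⟨fun lam v => mulVec_mulVec_eq_smul_of_mul_eq ?_, fun r => ⟨classZeroSumSubspace ℝ z r,
    finrank_classZeroSumSubspace (hpos r), fun w hw => ⟨hsbmMatrix_mulVec_of_mem z SigT μ hw,
    dotProduct_membershipMatrix_mulVec_eq_zero_of_mem hw⟩⟩⟩
  rw [← Matrix.mul_assoc, hsbmMatrix_mul_membershipMatrix z SigT μ hpos, hsqrt]
  simp only [Matrix.mul_assoc]

/-- The matrix `M = Z B Σ_T B Zᵀ - ⊕ᵣ μᵣ(I_{nᵣ} - J_{nᵣ}/nᵣ)`: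
(i) every eigenvalue of `√B Σ_T √B` is an eigenvalue of `M`, with eigenvector in
`range(Z)` (namely `Z√B v` for the corresponding eigenvector `v`), and
(ii) for each class `r`, `-μᵣ` is an eigenvalue of `M` with multiplicity `nᵣ - 1`:
there is a subspace of dimension `nᵣ - 1` on which `M` acts as `-μᵣ`, all of whose
elements are orthogonal to `range(Z)`. -/
theorem stmt11 (n m d : ℕ) (z : Fin n → Fin d)
    (nr : Fin d → ℕ) (hnr : nr = fun r => (Finset.univ.filter fun i => z i = r).card)
    (hpos : ∀ r, 0 < nr r)
    (T : Fin d → Fin m → ℕ) (hT : ∀ r p, T r p ≤ nr r)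
    (Z : Matrix (Fin n) (Fin d) ℝ) (hZ : Z = Matrix.of fun i r => if z i = r then 1 else 0)
    (B : Matrix (Fin d) (Fin d) ℝ) (hB : B = Matrix.diagonal fun r => ((nr r : ℝ))⁻¹)
    (sqrtB : Matrix (Fin d) (Fin d) ℝ)
    (hsB : sqrtB = Matrix.diagonal fun r => (Real.sqrt (nr r))⁻¹)
    (Tm : Matrix (Fin d) (Fin m) ℝ) (hTm : Tm = Matrix.of fun r p => (T r p : ℝ))
    (SigT : Matrix (Fin d) (Fin d) ℝ)
    (hSigT : SigT = Tm * Tm.transpose - Matrix.diagonal fun r => ∑ p, (T r p : ℝ))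
    (μ : Fin d → ℝ)
    (hμ : μ = fun r => ∑ p, (T r p : ℝ) * ((T r p : ℝ) - 1) / ((nr r : ℝ) * ((nr r : ℝ) - 1)))
    (D : Matrix (Fin n) (Fin n) ℝ)
    (hD : D = Matrix.of fun i j =>
      if z i = z j then μ (z i) * ((if i = j then 1 else 0) - ((nr (z i) : ℝ))⁻¹) else 0)
    (M : Matrix (Fin n) (Fin n) ℝ)
    (hM : M = Z * B * SigT * B * Z.transpose - D) :
    (∀ (lam : ℝ) (v : Fin d → ℝ), (sqrtB * SigT * sqrtB).mulVec v = lam • v →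
        M.mulVec ((Z * sqrtB).mulVec v) = lam • (Z * sqrtB).mulVec v) ∧
      (∀ r : Fin d, ∃ W : Submodule ℝ (Fin n → ℝ),
        Module.finrank ℝ W = nr r - 1 ∧
          ∀ w ∈ W, M.mulVec w = (-μ r) • w ∧
            ∀ v : Fin d → ℝ, dotProduct w (Z.mulVec v) = 0) :=
  stmt11_general n d z nr hnr hpos Z hZ B hB sqrtB hsB SigT μ D hD M hM
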